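/- arXiv:2302.09842 — 2 statements merged into one kernel-verified Lean document; each statement's English description precedes it below -/
import Mathlib

section
/- Let q ≥ 3, let t ≥ 1 and n ≥ t+1 be integers, and let x ∈ A_q(n,t) = {x ∈ Σ_q^n : x_1 = ⋯ = x_t = 0}. Let Φ_{n,t}(x) = y ∈ Σ_q^{n+1} be defined by y_1 = 0 and y_i = x_1 ⊞ x_2 ⊞ ⋯ ⊞ x_{i−1} for 2 ≤ i ≤ n+1, where a ⊞ b = a + b (mod q). Then Φ_{n−t,0}(B_t^{ct}(x)) = D_t(Φ_{n,t}(x)); that is: (1) if x′ is obtained from x by t contractions then Φ_{n−t,0}(x′) is obtained from Φ_{n,t}(x) by deleting t symbols, and (2) every sequence obtained from Φ_{n,t}(x) by deleting t symbols equals Φ_{n−t,0}(x′) for some x′ obtained from x by t contractions. -/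
/-- `a ⊞ b = a + b (mod q)`. -/
def cplus (q a b : ℕ) : ℕ := (a + b) % q

/-- `MergeBlocks op x y s`: `y` is obtained from `x` by merging disjoint blocks
(each of length at least `2`) via `op`, absorbing `s` symbols in total. -/
inductive MergeBlocks (op : ℕ → ℕ → ℕ) : List ℕ → List ℕ → ℕ → Prop
  | nil : MergeBlocks op [] [] 0
  | keep (a : ℕ) {x y : List ℕ} {s : ℕ} : MergeBlocks op x y s →
      MergeBlocks op (a :: x) (a :: y) s
  | block (b : List ℕ) {x y : List ℕ} {s : ℕ} : 2 ≤ b.length →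
      MergeBlocks op x y s →
      MergeBlocks op (b ++ x) (b.foldl op 0 :: y) (s + (b.length - 1))

/-- The `t`-contraction ball `B_t^{ct}(x)`: all `y` obtained from `x` by deleting the last
`t'` symbols (for some `t' ≤ t`) and merging disjoint blocks via `⊞`, with `t - t'` symbols
contracted. -/
def contractBall (q t : ℕ) (x : List ℕ) : Set (List ℕ) :=
  {y | ∃ t' ≤ t, MergeBlocks (cplus q) (x.take (x.length - t')) y (t - t')}

/-- The map `Φ` : `x ∈ Σ_q^m ↦ y ∈ Σ_q^{m+1}` with `y_1 = 0` and
`y_i = x_1 ⊞ ⋯ ⊞ x_{i-1}` for `i ≥ 2`. -/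
def phiMap (q : ℕ) (x : List ℕ) : List ℕ :=
  (List.range (x.length + 1)).map (fun i => (x.take i).sum % q)

def psum (q c : ℕ) (x : List ℕ) : List ℕ := (x.scanl (· + ·) c).map (· % q)

@[simp] lemma psum_nil (q c : ℕ) : psum q c [] = [c % q] := rfl

@[simp] lemma psum_cons (q c a : ℕ) (x : List ℕ) :
    psum q c (a :: x) = c % q :: psum q (c + a) x := by
  rw [psum, psum, List.scanl_cons, List.map_cons]

@[simp] lemma psum_length (q c : ℕ) (x : List ℕ) : (psum q c x).length = x.length + 1 := by
  simp [psum, List.length_scanl]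

lemma psum_congr (q : ℕ) {c₁ c₂ : ℕ} (x : List ℕ) (h : c₁ % q = c₂ % q) :
    psum q c₁ x = psum q c₂ x := by
  induction x generalizing c₁ c₂ with
  | nil => simp [h]
  | cons a x ih =>
      simp only [psum_cons, h]
      congr 1
      exact ih (by rw [Nat.add_mod c₁, h, ← Nat.add_mod])

lemma foldl_cplus_mod (q : ℕ) : ∀ (b : List ℕ) (e : ℕ),
    (b.foldl (cplus q) e) % q = (e + b.sum) % q := by
  intro b
  induction b with
  | nil => simp
  | cons a b ih =>
      intro e
      simp only [List.foldl_cons, List.sum_cons]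
      rw [ih, cplus]
      conv_rhs => rw [← Nat.add_assoc, Nat.add_mod]
      rw [Nat.add_mod, Nat.mod_mod_of_dvd _ dvd_rfl]

lemma psum_take (q : ℕ) : ∀ (m : ℕ) (x : List ℕ) (c : ℕ),
    psum q c (x.take m) = (psum q c x).take (m + 1) := by
  intro m
  induction m with
  | zero => intro x c; cases x <;> simp
  | succ m ih => intro x c; cases x <;> simp [ih]

lemma merge_length {op : ℕ → ℕ → ℕ} {u u' : List ℕ} {s : ℕ}
    (h : MergeBlocks op u u' s) : u'.length + s = u.length := by
  induction h with
  | nil => rfl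
  | keep a h ih => simp only [List.length_cons]; omega
  | block b hb h ih => simp only [List.length_cons, List.length_append]; omega

lemma sub_app (q : ℕ) : ∀ (b : List ℕ) (c : ℕ) (y x' : List ℕ), b ≠ [] →
    (psum q (c + b.sum) y).Sublist (psum q (c + b.sum) x') →
    (c % q :: psum q (c + b.sum) y).Sublist (psum q c (b ++ x')) := by
  intro b
  induction b with
  | nil => intro _ _ _ h; exact absurd rfl h
  | cons d b ih =>
      intro c y x' _ hsub
      rcases eq_or_ne b [] with rfl | hb
      · simp only [List.cons_append, List.nil_append, psum_cons, List.sum_cons,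
          List.sum_nil, Nat.add_zero] at hsub ⊢
        exact hsub.cons₂ _
      · have := ih (c + d) y x' hb (by rw [show c + d + b.sum = c + (d :: b).sum by simp; ring]; exact hsub)
        simp only [List.cons_append, psum_cons]
        refine List.Sublist.cons₂ _ ?_
        have h2 : (psum q (c + (d :: b).sum) y).Sublist
            ((c + d) % q :: psum q (c + d + b.sum) y) := by
          rw [show c + d + b.sum = c + (d :: b).sum by simp; ring]
          exact (List.Sublist.refl _).cons _
        exact h2.trans this

lemma merge_sublist (q : ℕ) {u u' : List ℕ} {s : ℕ}
    (h : MergeBlocks (cplus q) u u' s) : ∀ c, (psum q c u').Sublist (psum q c u) := by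
  induction h with
  | nil => intro c; exact List.Sublist.refl _
  | keep a h ih => intro c; rw [psum_cons, psum_cons]; exact (ih (c + a)).cons₂ _
  | block b hb h ih =>
      intro c
      have hb' : b ≠ [] := by intro h; subst h; simp at hb
      have he : ∀ z : List ℕ, psum q (c + b.foldl (cplus q) 0) z = psum q (c + b.sum) z := by
        intro z
        apply psum_congr
        rw [Nat.add_mod, foldl_cplus_mod, Nat.zero_add, ← Nat.add_mod]
      rw [psum_cons, he]
      exact sub_app q b c _ _ hb' (ih _)

def psumT (q c : ℕ) (x : List ℕ) : List ℕ := (psum q c x).tail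

@[simp] lemma psumT_nil (q c : ℕ) : psumT q c [] = [] := rfl

@[simp] lemma psumT_cons (q c a : ℕ) (x : List ℕ) :
    psumT q c (a :: x) = (c + a) % q :: psumT q (c + a) x := by
  cases x <;> simp [psumT]

@[simp] lemma psumT_length (q c : ℕ) (x : List ℕ) : (psumT q c x).length = x.length := by
  simp [psumT]

lemma psum_eq_cons_psumT (q c : ℕ) (x : List ℕ) : psum q c x = c % q :: psumT q c x := by
  cases x <;> simp [psumT]

lemma lead : ∀ (k : ℕ) (w z : List ℕ), w.Sublist (List.replicate (k + 1) 0 ++ z) →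
    z.length < w.length →
    w.head? = some 0 ∧ w.tail.Sublist (List.replicate k 0 ++ z) := by
  intro k
  induction k with
  | zero =>
      intro w z hw hl
      simp only [Nat.zero_add, List.replicate_one, List.cons_append, List.nil_append] at hw
      simp only [List.replicate_zero, List.nil_append]
      cases hw with
      | cons a h => exact absurd h.length_le (by omega)
      | cons_cons a h => exact ⟨rfl, by simpa using h⟩
  | succ k ih =>
      intro w z hw hl
      rw [show List.replicate (k + 2) 0 ++ z = 0 :: (List.replicate (k + 1) 0 ++ z) from rfl] at hw
      cases hw with
      | cons a h =>
          obtain ⟨h1, h2⟩ := ih w z h hl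
          refine ⟨h1, h2.trans ?_⟩
          rw [show List.replicate (k + 1) 0 ++ z = 0 :: (List.replicate k 0 ++ z) from rfl]
          exact (List.Sublist.refl _).cons _
      | cons_cons a h => exact ⟨rfl, h⟩

lemma psum_add_congr (q c e₁ e₂ : ℕ) (h : e₁ % q = e₂ % q) (z : List ℕ) :
    psum q (c + e₁) z = psum q (c + e₂) z :=
  psum_congr q z (by rw [Nat.add_mod, h, ← Nat.add_mod])

lemma backC (q : ℕ) : ∀ (u : List ℕ) (c : ℕ) (v : List ℕ) (s : ℕ),
    v.Sublist (psumT q c u) → v.length + s = u.length →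
    ∃ u' t', t' ≤ s ∧ MergeBlocks (cplus q) (u.take (u.length - t')) u' (s - t') ∧
      psum q c u' = c % q :: v := by
  intro u
  induction u with
  | nil =>
      intro c v s hv hs
      rw [psumT_nil] at hv
      have hv0 : v = [] := List.sublist_nil.mp hv
      subst hv0
      have hs0 : s = 0 := by simpa using hs
      subst hs0
      exact ⟨[], 0, le_refl 0, by simpa using MergeBlocks.nil, rfl⟩
  | cons a u₁ ih =>
      intro c v s hv hs
      rcases eq_or_ne v [] with rfl | hvne
      · -- full truncation: t' = s
        refine ⟨[], s, le_refl s, ?_, rfl⟩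
        have h0 : (a :: u₁).length - s = 0 := by
          simp only [List.length_nil, List.length_cons, Nat.zero_add] at hs
          simp only [List.length_cons]
          omega
        rw [h0, Nat.sub_self, List.take_zero]
        exact MergeBlocks.nil
      rcases v with _ | ⟨b, v₁⟩
      · exact absurd rfl hvne
      rw [psumT_cons] at hv
      have hlen1 : v₁.length + 1 + s = u₁.length + 1 := by simpa using hs
      cases hv with
      | cons_cons a' hv' =>
          obtain ⟨u₁', t', ht', hM, hp⟩ := ih (c + a) v₁ s hv' (by omega)
          have htu : t' ≤ u₁.length := by
            have := hv'.length_le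
            simp only [psumT_length] at this
            omega
          refine ⟨a :: u₁', t', ht', ?_, ?_⟩
          · rw [show (a :: u₁).length - t' = (u₁.length - t') + 1 by
              simp only [List.length_cons]; omega, List.take_succ_cons]
            exact hM.keep a
          · rw [psum_cons, hp]
      | cons a' hv' =>
          have hvlen : v₁.length + 1 ≤ u₁.length := by
            have := hv'.length_le
            simpa using this
          have hs1 : 1 ≤ s := by omega
          obtain ⟨u₁', t', ht', hM, hp⟩ := ih (c + a) (b :: v₁) (s - 1) hv'
            (by simp only [List.length_cons]; omega)
          have hu₁ne : u₁' ≠ [] := by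
            intro h
            subst h
            simp [psum_nil] at hp
          have htu : t' ≤ u₁.length := by omega
          generalize hg : u₁.take (u₁.length - t') = uT at hM
          generalize hg2 : s - 1 - t' = m at hM
          cases hM with
          | nil => exact absurd rfl hu₁ne
          | keep d hM₂ =>
              rename_i z y₁
              -- uT = d :: z, u₁' = d :: y₁
              refine ⟨[a, d].foldl (cplus q) 0 :: y₁, t', by omega, ?_, ?_⟩
              · have hval : MergeBlocks (cplus q) ([a, d] ++ z)
                    ([a, d].foldl (cplus q) 0 :: y₁) (m + ([a, d].length - 1)) :=
                  MergeBlocks.block [a, d] (by simp) hM₂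
                have harith : m + ([a, d].length - 1) = s - t' := by
                  simp only [List.length_cons, List.length_nil]
                  omega
                rw [harith] at hval
                rw [show (a :: u₁).length - t' = (u₁.length - t') + 1 by
                  simp only [List.length_cons]; omega, List.take_succ_cons, hg]
                exact hval
              · rw [psum_cons] at hp ⊢
                have hb : psum q (c + a + d) y₁ = b :: v₁ := by
                  rw [List.cons.injEq] at hp
                  exact hp.2
                rw [psum_add_congr q c ([a, d].foldl (cplus q) 0) (a + d)
                  (by rw [foldl_cplus_mod]; simp)]
                rw [← Nat.add_assoc, hb]
          | block bb hbb hM₂ =>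
              rename_i z y₁ m₂
              -- here m = m₂ + (bb.length - 1)
              -- uT = bb ++ z, u₁' = bb.foldl (cplus q) 0 :: y₁, m = m₂ + (bb.length - 1)
              refine ⟨(a :: bb).foldl (cplus q) 0 :: y₁, t', by omega, ?_, ?_⟩
              · have hval : MergeBlocks (cplus q) ((a :: bb) ++ z)
                    ((a :: bb).foldl (cplus q) 0 :: y₁) (m₂ + ((a :: bb).length - 1)) :=
                  MergeBlocks.block (a :: bb) (by simp only [List.length_cons]; omega) hM₂
                have harith : m₂ + ((a :: bb).length - 1) = s - t' := by
                  simp only [List.length_cons]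
                  omega
                rw [harith] at hval
                rw [show (a :: u₁).length - t' = (u₁.length - t') + 1 by
                  simp only [List.length_cons]; omega, List.take_succ_cons, hg]
                exact hval
              · rw [psum_cons] at hp ⊢
                have hb : psum q (c + a + bb.foldl (cplus q) 0) y₁ = b :: v₁ := by
                  rw [List.cons.injEq] at hp
                  exact hp.2
                have hb2 : psum q (c + a + bb.sum) y₁ = b :: v₁ := by
                  rw [← hb]
                  exact psum_add_congr q (c + a) bb.sum (bb.foldl (cplus q) 0)
                    (by rw [foldl_cplus_mod]; simp) y₁
                rw [psum_add_congr q c ((a :: bb).foldl (cplus q) 0) (a + bb.sum)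
                  (by rw [foldl_cplus_mod]; simp)]
                rw [← Nat.add_assoc, hb2]

lemma psum_eq_range (q : ℕ) : ∀ (x : List ℕ) (c : ℕ),
    psum q c x = (List.range (x.length + 1)).map (fun i => (c + (x.take i).sum) % q) := by
  intro x
  induction x with
  | nil => intro c; simp
  | cons a x ih =>
      intro c
      rw [psum_cons, ih]
      conv_rhs => rw [show (a :: x).length + 1 = (x.length + 1) + 1 from rfl,
        List.range_succ_eq_map]
      simp only [List.map_cons, List.map_map]
      congr 1
      apply List.map_congr_left
      intro i _
      simp only [Function.comp_apply, List.take_succ_cons, List.sum_cons]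
      rw [Nat.add_assoc]

lemma phiMap_eq_psum (q : ℕ) (x : List ℕ) : phiMap q x = psum q 0 x := by
  rw [phiMap, psum_eq_range]
  simp

lemma psum_rep (q : ℕ) : ∀ (k : ℕ) (z : List ℕ),
    psum q 0 (List.replicate k 0 ++ z) = List.replicate k 0 ++ psum q 0 z := by
  intro k
  induction k with
  | zero => simp
  | succ k ih => intro z; simp [List.replicate_succ, ih z]

lemma take_eq_rep (x : List ℕ) (t : ℕ) (h0 : ∀ i < t, x.getD i 0 = 0)
    (ht : t ≤ x.length) : x.take t = List.replicate t 0 := by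
  apply List.ext_getElem
  · simp [ht]
  · intro i h1 h2
    rw [List.getElem_take, List.getElem_replicate]
    have hi : i < t := by simpa [ht] using h1
    have := h0 i hi
    rwa [List.getD_eq_getElem x 0 (by omega)] at this

/-- Lemma 12: for `q ≥ 3`, `t ≥ 1`, `n ≥ t+1` and
`x ∈ A_q(n,t)` (i.e. `x ∈ Σ_q^n` with `x_1 = ⋯ = x_t = 0`),
`Φ_{n-t,0}(B_t^{ct}(x)) = D_t(Φ_{n,t}(x))`: the image under `Φ` of the `t`-contraction ball
of `x` equals the set of subsequences of `Φ(x)` of length `n+1-t`. -/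
theorem stmt18 (q n t : ℕ) (hq : 3 ≤ q) (ht : 1 ≤ t) (hn : t + 1 ≤ n)
    (x : List ℕ) (hxlen : x.length = n) (hxq : ∀ a ∈ x, a < q)
    (hx0 : ∀ i < t, x.getD i 0 = 0) :
    {w : List ℕ | ∃ x' ∈ contractBall q t x, w = phiMap q x'} =
      {w : List ℕ | w.Sublist (phiMap q x) ∧ w.length = n + 1 - t} := by
  subst hxlen
  ext w
  simp only [Set.mem_setOf_eq, contractBall]
  constructor
  · rintro ⟨x', ⟨t', ht', hM⟩, rfl⟩
    have hlen := merge_length hM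
    rw [List.length_take] at hlen
    have htn : t ≤ x.length := by omega
    constructor
    · rw [phiMap_eq_psum, phiMap_eq_psum]
      refine (merge_sublist q hM 0).trans ?_
      rw [psum_take]
      exact List.take_sublist _ _
    · rw [phiMap_eq_psum, psum_length]
      omega
  · rintro ⟨hsub, hlen⟩
    rw [phiMap_eq_psum] at hsub
    have htn : t ≤ x.length := by omega
    have hdecomp : psum q 0 x = List.replicate (t + 1) 0 ++ psumT q 0 (x.drop t) := by
      conv_lhs => rw [← List.take_append_drop t x, take_eq_rep x t hx0 htn, psum_rep]
      rw [psum_eq_cons_psumT q 0 (x.drop t), Nat.zero_mod, List.replicate_succ',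
        List.append_assoc, List.singleton_append]
    have hwlen : (psumT q 0 (x.drop t)).length < w.length := by
      rw [psumT_length, List.length_drop, hlen]
      omega
    rw [hdecomp] at hsub
    obtain ⟨hhead, htail⟩ := lead t w _ hsub hwlen
    have htail' : w.tail.Sublist (psumT q 0 x) := by
      have heq : psumT q 0 x = List.replicate t 0 ++ psumT q 0 (x.drop t) := by
        rw [psumT, hdecomp, List.replicate_succ, List.cons_append, List.tail_cons]
      rw [heq]
      exact htail
    have hwne : w ≠ [] := by intro h; subst h; simp at hhead
    obtain ⟨x', t', ht', hM, hp⟩ := backC q x 0 w.tail t htail' (by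
      have h1 : w.tail.length = w.length - 1 := by simp [List.length_tail]
      omega)
    refine ⟨x', ⟨t', ht', hM⟩, ?_⟩
    rw [phiMap_eq_psum, hp, Nat.zero_mod]
    cases w with
    | nil => simp at hhead
    | cons h0 wt =>
        simp only [List.head?_cons, Option.some.injEq] at hhead
        rw [hhead, List.tail_cons]
end

section
/- Let q ≥ 2 and let δ = c_1 + c_2⌈log_q(n)⌉, where c_1 and c_2 are positive multiples of 4 satisfying (c_1 − 4)·log_q(e)/(4q^4) ≥ 5 and c_2·log_q(e)/(4q^4) ≥ 1. Let S be the set of all sequences of length δ−4 over Σ_q that do not contain 0011 as a substring. Then |S| ≤ (q^4 − 1)^{(δ−4)/4} ≤ q^{δ − ⌈log_q(n)⌉ − 9}; in particular, there exists an injective map g : S → Σ_q^{δ − ⌈log_q(n)⌉ − 9}. -/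
private lemma listSet_eq_range (q L : ℕ) :
    {l : List ℕ | l.length = L ∧ ∀ a ∈ l, a < q} =
      Set.range (fun f : Fin L → Fin q => List.ofFn fun i => (f i : ℕ)) := by
  ext l
  constructor
  · rintro ⟨hlen, hmem⟩
    subst hlen
    refine ⟨fun i => ⟨l.get i, hmem _ (l.get_mem i)⟩, ?_⟩
    simp [List.ofFn_get]
  · rintro ⟨f, rfl⟩
    refine ⟨by simp, ?_⟩
    intro a ha
    rw [List.mem_ofFn] at ha
    obtain ⟨i, rfl⟩ := ha
    exact (f i).isLt

private lemma listF_injective (q L : ℕ) :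
    Function.Injective (fun f : Fin L → Fin q => List.ofFn fun i => (f i : ℕ)) := by
  intro f g h
  simp only [List.ofFn_inj] at h
  funext i
  exact Fin.ext (congrFun h i)

private lemma listSet_finite (q L : ℕ) :
    {l : List ℕ | l.length = L ∧ ∀ a ∈ l, a < q}.Finite := by
  rw [listSet_eq_range]; exact Set.finite_range _

private lemma listSet_ncard (q L : ℕ) :
    {l : List ℕ | l.length = L ∧ ∀ a ∈ l, a < q}.ncard = q ^ L := by
  rw [← Nat.card_coe_set_eq, listSet_eq_range,
    Nat.card_range_of_injective (listF_injective q L)]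
  simp [Nat.card_eq_fintype_card]

private lemma set_prod_ncard {α β : Type*} (s : Set α) (t : Set β) :
    (s ×ˢ t).ncard = s.ncard * t.ncard := by
  rw [← Nat.card_coe_set_eq, ← Nat.card_coe_set_eq, ← Nat.card_coe_set_eq,
    ← Nat.card_prod]
  exact Nat.card_congr (Equiv.Set.prod s t)

private lemma avoid_finite (q m : ℕ) :
    {s : List ℕ | s.length = m ∧ (∀ a ∈ s, a < q) ∧ ¬ [0, 0, 1, 1] <:+: s}.Finite :=
  (listSet_finite q m).subset (fun s hs => ⟨hs.1, hs.2.1⟩)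

private lemma avoid_ncard (q : ℕ) (hq : 2 ≤ q) (j : ℕ) :
    {s : List ℕ | s.length = 4 * j ∧ (∀ a ∈ s, a < q) ∧ ¬ [0, 0, 1, 1] <:+: s}.ncard
      ≤ (q ^ 4 - 1) ^ j := by
  induction j with
  | zero =>
    have hsub : {s : List ℕ | s.length = 4 * 0 ∧ (∀ a ∈ s, a < q) ∧ ¬ [0, 0, 1, 1] <:+: s}
        ⊆ {([] : List ℕ)} := by
      rintro s ⟨hlen, -, -⟩
      simp only [Nat.mul_zero, List.length_eq_zero_iff] at hlen
      simp [hlen]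
    calc {s : List ℕ | s.length = 4 * 0 ∧ (∀ a ∈ s, a < q) ∧ ¬ [0, 0, 1, 1] <:+: s}.ncard
        ≤ ({([] : List ℕ)} : Set (List ℕ)).ncard :=
          Set.ncard_le_ncard hsub (Set.finite_singleton _)
      _ = 1 := Set.ncard_singleton _
      _ ≤ (q ^ 4 - 1) ^ 0 := by simp
  | succ j ih =>
    set pat : List ℕ := [0, 0, 1, 1] with hpat
    set B : Set (List ℕ) := {l : List ℕ | l.length = 4 ∧ ∀ a ∈ l, a < q} \ {pat} with hB
    set A : Set (List ℕ) :=
      {s : List ℕ | s.length = 4 * j ∧ (∀ a ∈ s, a < q) ∧ ¬ pat <:+: s} with hA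
    have hBfin : B.Finite := ((listSet_finite q 4).subset Set.diff_subset)
    have hAfin : A.Finite := avoid_finite q (4 * j)
    have hpatmem : pat ∈ {l : List ℕ | l.length = 4 ∧ ∀ a ∈ l, a < q} := by
      constructor
      · simp [hpat]
      · intro a ha
        simp only [hpat, List.mem_cons, List.not_mem_nil, or_false] at ha
        rcases ha with rfl | rfl | rfl | rfl <;> omega
    have hBcard : B.ncard = q ^ 4 - 1 := by
      rw [hB, Set.ncard_diff_singleton_of_mem hpatmem, listSet_ncard]
    have hmap : ∀ s ∈ {s : List ℕ | s.length = 4 * (j + 1) ∧ (∀ a ∈ s, a < q) ∧ ¬ pat <:+: s},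
        (s.take 4, s.drop 4) ∈ B ×ˢ A := by
      rintro s ⟨hlen, hmem, hinf⟩
      refine ⟨⟨⟨?_, fun a ha => hmem a (List.mem_of_mem_take ha)⟩, ?_⟩, ?_, ?_, ?_⟩
      · rw [List.length_take]; omega
      · intro h
        simp only [Set.mem_singleton_iff] at h
        exact hinf (h ▸ (List.take_prefix 4 s).isInfix)
      · rw [List.length_drop]; omega
      · exact fun a ha => hmem a (List.mem_of_mem_drop ha)
      · exact fun h => hinf (h.trans (List.drop_suffix 4 s).isInfix)
    have hinj : Set.InjOn (fun s : List ℕ => (s.take 4, s.drop 4))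
        {s : List ℕ | s.length = 4 * (j + 1) ∧ (∀ a ∈ s, a < q) ∧ ¬ pat <:+: s} := by
      intro a _ b _ h
      simp only [Prod.mk.injEq] at h
      rw [← List.take_append_drop 4 a, ← List.take_append_drop 4 b, h.1, h.2]
    calc {s : List ℕ | s.length = 4 * (j + 1) ∧ (∀ a ∈ s, a < q) ∧ ¬ pat <:+: s}.ncard
        ≤ (B ×ˢ A).ncard :=
          Set.ncard_le_ncard_of_injOn _ hmap hinj (hBfin.prod hAfin)
      _ = (q ^ 4 - 1) * A.ncard := by rw [set_prod_ncard, hBcard]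
      _ ≤ (q ^ 4 - 1) * (q ^ 4 - 1) ^ j := Nat.mul_le_mul_left _ ih
      _ = (q ^ 4 - 1) ^ (j + 1) := (pow_succ' _ _).symm

private lemma key_real (q j K : ℕ) (hq : 2 ≤ q)
    (h : ((K : ℝ) + 5) * Real.log q * (q : ℝ) ^ 4 ≤ (j : ℝ))
    (hK : K + 5 ≤ 4 * j) :
    (q ^ 4 - 1) ^ j ≤ q ^ (4 * j - K - 5) := by
  have hq0 : (0 : ℝ) < (q : ℝ) := by positivity
  have hq4 : (0 : ℝ) < (q : ℝ) ^ 4 := by positivity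
  have hlg : (0 : ℝ) < Real.log q := Real.log_pos (by exact_mod_cast hq)
  set k : ℕ := 4 * j - K - 5 with hk
  have hkj : 4 * j = k + (K + 5) := by omega
  have hcast : ((q ^ 4 - 1 : ℕ) : ℝ) = (q : ℝ) ^ 4 - 1 := by
    have h1 : (1 : ℕ) ≤ q ^ 4 := Nat.one_le_pow _ _ (by omega)
    push_cast [Nat.cast_sub h1]
    ring
  rw [← Nat.cast_le (α := ℝ)]
  push_cast [hcast]
  have step2 : (q : ℝ) ^ 4 - 1 ≤ (q : ℝ) ^ 4 * Real.exp (-((q : ℝ) ^ 4)⁻¹) := by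
    have := Real.add_one_le_exp (-((q : ℝ) ^ 4)⁻¹)
    have hinv : (q : ℝ) ^ 4 * ((q : ℝ) ^ 4)⁻¹ = 1 := mul_inv_cancel₀ (ne_of_gt hq4)
    nlinarith [hq4]
  have hnn : (0 : ℝ) ≤ (q : ℝ) ^ 4 - 1 := by
    nlinarith [hq4, pow_le_pow_left₀ (by norm_num : (0:ℝ) ≤ 2)
      (show (2:ℝ) ≤ q by exact_mod_cast hq) 4]
  calc ((q : ℝ) ^ 4 - 1) ^ j
      ≤ ((q : ℝ) ^ 4 * Real.exp (-((q : ℝ) ^ 4)⁻¹)) ^ j :=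
        pow_le_pow_left₀ hnn step2 j
    _ = (q : ℝ) ^ (4 * j) * Real.exp ((j : ℝ) * -((q : ℝ) ^ 4)⁻¹) := by
        rw [mul_pow, ← pow_mul, ← Real.exp_nat_mul]
    _ ≤ (q : ℝ) ^ (4 * j) * Real.exp (-(((K : ℝ) + 5) * Real.log q)) := by
        apply mul_le_mul_of_nonneg_left _ (by positivity)
        apply Real.exp_le_exp.mpr
        rw [mul_neg, neg_le_neg_iff]
        rw [← le_div_iff₀ hq4] at h
        rw [div_eq_mul_inv] at h
        linarith
    _ = (q : ℝ) ^ (4 * j) * ((q : ℝ) ^ (K + 5))⁻¹ := by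
        rw [Real.exp_neg]
        congr 1
        have : ((K : ℝ) + 5) * Real.log q = ((K + 5 : ℕ) : ℝ) * Real.log q := by push_cast; ring
        rw [this, Real.exp_nat_mul, Real.exp_log hq0]
    _ = (q : ℝ) ^ k := by
        rw [hkj, pow_add, mul_assoc, mul_inv_cancel₀ (by positivity), mul_one]

/-- compression lemma: let `q ≥ 2`, `δ = c_1 + c_2⌈log_q n⌉` with `c_1, c_2`
positive multiples of `4` satisfying `(c_1-4)·log_q(e)/(4q^4) ≥ 5` and
`c_2·log_q(e)/(4q^4) ≥ 1`. If `S` is the set of sequences of length `δ-4` over `Σ_q` not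
containing `0011` as a substring, then `|S| ≤ (q^4-1)^{(δ-4)/4} ≤ q^{δ-⌈log_q n⌉-9}`; in
particular there is an injection `g : S → Σ_q^{δ-⌈log_q n⌉-9}`. -/
theorem stmt19 (q n c1 c2 δ : ℕ) (hq : 2 ≤ q)
    (hc1 : 0 < c1) (hc2 : 0 < c2) (h4c1 : 4 ∣ c1) (h4c2 : 4 ∣ c2)
    (hlog1 : 5 ≤ ((c1 : ℝ) - 4) * Real.logb q (Real.exp 1) / (4 * (q : ℝ) ^ 4))
    (hlog2 : 1 ≤ (c2 : ℝ) * Real.logb q (Real.exp 1) / (4 * (q : ℝ) ^ 4))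
    (hδ : δ = c1 + c2 * Nat.clog q n)
    (S : Set (List ℕ))
    (hS : S = {s : List ℕ | s.length = δ - 4 ∧ (∀ a ∈ s, a < q) ∧ ¬ [0, 0, 1, 1] <:+: s}) :
    S.ncard ≤ (q ^ 4 - 1) ^ ((δ - 4) / 4) ∧
    (q ^ 4 - 1) ^ ((δ - 4) / 4) ≤ q ^ (δ - Nat.clog q n - 9) ∧
    ∃ g : List ℕ → List ℕ, Set.InjOn g S ∧
      ∀ s ∈ S, (g s).length = δ - Nat.clog q n - 9 ∧ ∀ a ∈ g s, a < q := by
  subst hS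
  set L : ℕ := Nat.clog q n with hL
  -- basic arithmetic facts
  have hc14 : 4 ≤ c1 := Nat.le_of_dvd hc1 h4c1
  have hδ4 : 4 ≤ δ := by omega
  have hdvd : 4 ∣ δ - 4 := by
    obtain ⟨a, ha⟩ := h4c1
    obtain ⟨b, hb⟩ := h4c2
    have hm : c2 * L = 4 * (b * L) := by rw [hb]; ring
    exact ⟨(a - 1) + b * L, by omega⟩
  set j : ℕ := (δ - 4) / 4 with hjdef
  have hj4 : 4 * j = δ - 4 := Nat.mul_div_cancel' hdvd
  -- real facts
  have hq0 : (0 : ℝ) < (q : ℝ) := by positivity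
  have hq2 : (2 : ℝ) ≤ (q : ℝ) := by exact_mod_cast hq
  have hlg : (0 : ℝ) < Real.log q := Real.log_pos (by exact_mod_cast hq)
  have hlg2 : Real.log 2 ≤ Real.log q := Real.log_le_log (by norm_num) hq2
  have hlog2' : (0.6931471803 : ℝ) < Real.log 2 := Real.log_two_gt_d9
  have hq4 : (0 : ℝ) < 4 * (q : ℝ) ^ 4 := by positivity
  have hq16 : (16 : ℝ) ≤ (q : ℝ) ^ 4 := by
    have := pow_le_pow_left₀ (by norm_num : (0:ℝ) ≤ 2) hq2 4
    norm_num at this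
    linarith
  have hlogb : Real.logb q (Real.exp 1) = 1 / Real.log q := by
    rw [Real.logb, Real.log_exp]
  rw [hlogb] at hlog1 hlog2
  have h1 : 20 * (q : ℝ) ^ 4 * Real.log q ≤ (c1 : ℝ) - 4 := by
    rw [le_div_iff₀ hq4] at hlog1
    have h := mul_le_mul_of_nonneg_right hlog1 hlg.le
    have key : ((c1 : ℝ) - 4) * (1 / Real.log q) * Real.log q = (c1 : ℝ) - 4 := by
      field_simp
    rw [key] at h
    nlinarith
  have h2 : 4 * (q : ℝ) ^ 4 * Real.log q ≤ (c2 : ℝ) := by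
    rw [le_div_iff₀ hq4] at hlog2
    have h := mul_le_mul_of_nonneg_right hlog2 hlg.le
    have key : (c2 : ℝ) * (1 / Real.log q) * Real.log q = (c2 : ℝ) := by
      field_simp
    rw [key] at h
    nlinarith
  have hδreal : ((δ : ℝ) - 4) = ((c1 : ℝ) - 4) + (c2 : ℝ) * (L : ℝ) := by
    have : (δ : ℝ) = (c1 : ℝ) + (c2 : ℝ) * (L : ℝ) := by exact_mod_cast congrArg (Nat.cast : ℕ → ℝ) hδ
    linarith
  have hLnn : (0 : ℝ) ≤ (L : ℝ) := Nat.cast_nonneg _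
  have hbig : 4 * (((L : ℝ) + 5) * Real.log q * (q : ℝ) ^ 4) ≤ (δ : ℝ) - 4 := by
    have h2L : 4 * (q : ℝ) ^ 4 * Real.log q * (L : ℝ) ≤ (c2 : ℝ) * (L : ℝ) :=
      mul_le_mul_of_nonneg_right h2 hLnn
    nlinarith
  have hj4real : ((4 * j : ℕ) : ℝ) = (δ : ℝ) - 4 := by
    rw [hj4]
    push_cast [Nat.cast_sub hδ4]
    ring
  have hjreal : ((L : ℝ) + 5) * Real.log q * (q : ℝ) ^ 4 ≤ (j : ℝ) := by
    have : (4 : ℝ) * (j : ℝ) = (δ : ℝ) - 4 := by push_cast at hj4real ⊢; linarith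
    linarith [hbig]
  -- δ ≥ L + 9
  have hL9 : L + 9 ≤ δ := by
    have h069 : (0.6 : ℝ) ≤ Real.log q := by linarith
    have hlq1 : (1 : ℝ) ≤ 4 * (Real.log q * (q : ℝ) ^ 4) := by
      have h64 : (64 : ℝ) ≤ 4 * (q : ℝ) ^ 4 := by linarith
      have := mul_le_mul h64 h069 (by norm_num) (by positivity)
      nlinarith
    have h5 : (0 : ℝ) ≤ (L : ℝ) + 5 := by positivity
    have hmul := mul_le_mul_of_nonneg_left hlq1 h5
    have heq : ((L : ℝ) + 5) * (4 * (Real.log q * (q : ℝ) ^ 4))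
        = 4 * (((L : ℝ) + 5) * Real.log q * (q : ℝ) ^ 4) := by ring
    rw [heq] at hmul
    have h1 : ((L : ℝ) + 5) ≤ (δ : ℝ) - 4 := by linarith
    have h2 : ((L : ℝ) + 9) ≤ (δ : ℝ) := by linarith
    exact_mod_cast h2
  have hK5 : L + 5 ≤ 4 * j := by omega
  have hexp : δ - L - 9 = 4 * j - L - 5 := by omega
  -- part 1
  have part1 : {s : List ℕ | s.length = δ - 4 ∧ (∀ a ∈ s, a < q) ∧ ¬ [0, 0, 1, 1] <:+: s}.ncard
      ≤ (q ^ 4 - 1) ^ j := by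
    have := avoid_ncard q hq j
    rwa [hj4] at this
  -- part 2
  have part2 : (q ^ 4 - 1) ^ j ≤ q ^ (δ - L - 9) := by
    rw [hexp]
    exact key_real q j L hq hjreal hK5
  refine ⟨part1, part2, ?_⟩
  -- part 3: injection
  set k9 : ℕ := δ - L - 9 with hk9
  set T : Set (List ℕ) := {l : List ℕ | l.length = k9 ∧ ∀ a ∈ l, a < q} with hT
  have hSfin : {s : List ℕ | s.length = δ - 4 ∧ (∀ a ∈ s, a < q) ∧ ¬ [0, 0, 1, 1] <:+: s}.Finite :=
    avoid_finite q (δ - 4)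
  have hTfin : T.Finite := listSet_finite q k9
  have hcardle : {s : List ℕ | s.length = δ - 4 ∧ (∀ a ∈ s, a < q) ∧ ¬ [0, 0, 1, 1] <:+: s}.ncard
      ≤ T.ncard := by
    rw [hT, listSet_ncard]
    exact le_trans part1 part2
  haveI := hSfin.fintype
  haveI := hTfin.fintype
  have hfc : Fintype.card
      {s : List ℕ | s.length = δ - 4 ∧ (∀ a ∈ s, a < q) ∧ ¬ [0, 0, 1, 1] <:+: s} ≤
      Fintype.card T := by
    rw [← Nat.card_eq_fintype_card, ← Nat.card_eq_fintype_card,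
      Nat.card_coe_set_eq, Nat.card_coe_set_eq]
    exact hcardle
  obtain ⟨f⟩ := Function.Embedding.nonempty_of_card_le hfc
  classical
  refine ⟨fun s => if h : s ∈ {s : List ℕ | s.length = δ - 4 ∧ (∀ a ∈ s, a < q) ∧
      ¬ [0, 0, 1, 1] <:+: s} then (f ⟨s, h⟩ : List ℕ) else [], ?_, ?_⟩
  · intro a ha b hb hab
    simp only [dif_pos ha, dif_pos hb] at hab
    have := f.injective (Subtype.coe_injective hab)
    exact congrArg Subtype.val this
  · intro s hs
    simp only [dif_pos hs]
    exact ⟨(f ⟨s, hs⟩).2.1, (f ⟨s, hs⟩).2.2⟩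
end
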